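/- arXiv:1409.8099 — 4 statements merged into one kernel-verified Lean document; each statement's English description precedes it below -/
import Mathlib

section
/- Let G be a group acting faithfully on a set X, and let a, b ∈ G with b² ≠ 1. Suppose X_a and X_b are subsets of X with neither contained in the other, such that for every integer n: if bⁿ ≠ 1 then bⁿ · X_a ⊆ X_b, and if aⁿ ≠ 1 then aⁿ · X_b ⊆ X_a. Then the subgroup ⟨a, b⟩ is naturally isomorphic to the free product ⟨a⟩ * ⟨b⟩. -/
/-!
Of the ping-pong sets the argument needs only that none is contained in another. A nonempty
reduced word beginning in the factor `i` and ending in the factor `j` maps every `X k` with `k ≠ j`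
into `X i`; if it acted trivially, then `X k ⊆ X i`, which is impossible when also `k ≠ i`. With
only two factors, a word beginning and ending in different factors is first conjugated, by an
element of a factor with at least three elements, into one beginning and ending in the same
factor. For `⟨b⟩` these three elements are `1`, `b` and `b²`.
-/

open Cardinal Subgroup Pointwise

namespace Monoid.CoprodI

variable {ι : Type*} {G : Type*} [Group G] {H : ι → Type*} [∀ i, Group (H i)]
  (f : ∀ i, H i →* G) {α : Type*} [MulAction G α] (X : ι → Set α)

theorem lift_neWord_prod_ne_one_of_ne_of_ne (hXsub : Pairwise fun i j => ¬ X i ⊆ X j)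
    (hpp : Pairwise fun i j => ∀ h : H i, h ≠ 1 → f i h • X j ⊆ X i)
    {i j k : ι} (w : NeWord H i j) (hhead : k ≠ i) (hlast : k ≠ j) : lift f w.prod ≠ 1 := by
  intro heq1
  have := lift_word_ping_pong f X hpp w hlast.symm
  rw [heq1, one_smul] at this
  exact hXsub hhead this

theorem lift_neWord_prod_ne_one_of_head_eq_last [Nontrivial ι]
    (hXsub : Pairwise fun i j => ¬ X i ⊆ X j)
    (hpp : Pairwise fun i j => ∀ h : H i, h ≠ 1 → f i h • X j ⊆ X i)
    {i : ι} (w : NeWord H i i) : lift f w.prod ≠ 1 := by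
  obtain ⟨k, hk⟩ := exists_ne i
  exact lift_neWord_prod_ne_one_of_ne_of_ne f X hXsub hpp w hk hk

theorem lift_neWord_prod_ne_one_of_three_le_head [Nontrivial ι]
    (hXsub : Pairwise fun i j => ¬ X i ⊆ X j)
    (hpp : Pairwise fun i j => ∀ h : H i, h ≠ 1 → f i h • X j ⊆ X i)
    {i j : ι} (w : NeWord H i j) (hcard : 3 ≤ #(H i)) (hij : i ≠ j) : lift f w.prod ≠ 1 := by
  obtain ⟨h, hh1, hh⟩ := exists_ne_ne_of_three_le hcard 1 w.head⁻¹
  have hmul : h * w.head ≠ 1 := fun h1 => hh (eq_inv_of_mul_eq_one_left h1)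
  let w' : NeWord H i i :=
    (w.mulHead h hmul).append hij.symm (NeWord.singleton h⁻¹ (inv_ne_one.mpr hh1))
  intro heq1
  apply lift_neWord_prod_ne_one_of_head_eq_last f X hXsub hpp w'
  simp [w', heq1]

theorem lift_neWord_prod_ne_one [Nontrivial ι] (hcard : 3 ≤ #ι ∨ ∃ i, 3 ≤ #(H i))
    (hXsub : Pairwise fun i j => ¬ X i ⊆ X j)
    (hpp : Pairwise fun i j => ∀ h : H i, h ≠ 1 → f i h • X j ⊆ X i)
    {i j : ι} (w : NeWord H i j) : lift f w.prod ≠ 1 := by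
  obtain hcard | ⟨k, hcard⟩ := hcard
  · obtain ⟨k, hki, hkj⟩ := exists_ne_ne_of_three_le hcard i j
    exact lift_neWord_prod_ne_one_of_ne_of_ne f X hXsub hpp w hki hkj
  by_cases hik : i = k <;> by_cases hjk : j = k
  · subst hik hjk
    exact lift_neWord_prod_ne_one_of_head_eq_last f X hXsub hpp w
  · subst hik
    exact lift_neWord_prod_ne_one_of_three_le_head f X hXsub hpp w hcard (Ne.symm hjk)
  · subst hjk
    rw [Ne, ← inv_eq_one, ← map_inv, ← NeWord.inv_prod]
    exact lift_neWord_prod_ne_one_of_three_le_head f X hXsub hpp w.inv hcard (Ne.symm hik)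
  · exact lift_neWord_prod_ne_one_of_ne_of_ne f X hXsub hpp w (Ne.symm hik) (Ne.symm hjk)

theorem lift_injective_of_ping_pong_of_not_subset [Nontrivial ι]
    (hcard : 3 ≤ #ι ∨ ∃ i, 3 ≤ #(H i)) (hXsub : Pairwise fun i j => ¬ X i ⊆ X j)
    (hpp : Pairwise fun i j => ∀ h : H i, h ≠ 1 → f i h • X j ⊆ X i) :
    Function.Injective (lift f) := by
  classical
  refine (injective_iff_map_eq_one (lift f)).mpr fun x hx => ?_
  obtain ⟨w, rfl⟩ := Word.equiv.symm.surjective x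
  by_contra hne
  have hw : w ≠ Word.empty := by rintro rfl; exact hne rfl
  obtain ⟨i, j, w, rfl⟩ := NeWord.of_word w hw
  exact lift_neWord_prod_ne_one f X hcard hXsub hpp w hx

end Monoid.CoprodI

namespace Monoid.Coprod

variable {H : Bool → Type*}

def toCoprodI [∀ i, Monoid (H i)] : H true ∗ H false →* CoprodI H :=
  lift (CoprodI.of (i := true)) (CoprodI.of (i := false))

def ofCoprodI [∀ i, Monoid (H i)] : CoprodI H →* H true ∗ H false :=
  CoprodI.lift fun
    | true => inl
    | false => inr

theorem ofCoprodI_comp_toCoprodI [∀ i, Monoid (H i)] :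
    ofCoprodI.comp toCoprodI = MonoidHom.id (H true ∗ H false) := by
  ext <;> simp [toCoprodI, ofCoprodI]

theorem toCoprodI_injective [∀ i, Monoid (H i)] :
    Function.Injective (toCoprodI : H true ∗ H false →* CoprodI H) :=
  Function.LeftInverse.injective (DFunLike.congr_fun ofCoprodI_comp_toCoprodI)

theorem lift_eq_coprodI_lift_comp_toCoprodI [∀ i, Monoid (H i)] {P : Type*} [Monoid P]
    (f : H true →* P) (g : H false →* P) :
    lift f g = (CoprodI.lift (Bool.rec g f)).comp toCoprodI := by
  ext <;> simp [toCoprodI]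

theorem lift_injective_of_ping_pong [∀ i, Group (H i)] {G : Type*} [Group G]
    {α : Type*} [MulAction G α] (f : H true →* G) (g : H false →* G) (X Y : Set α)
    (hXY : ¬ X ⊆ Y) (hYX : ¬ Y ⊆ X) (hcard : 3 ≤ #(H true) ∨ 3 ≤ #(H false))
    (hf : ∀ m, m ≠ 1 → f m • Y ⊆ X) (hg : ∀ n, n ≠ 1 → g n • X ⊆ Y) :
    Function.Injective (lift f g) := by
  rw [lift_eq_coprodI_lift_comp_toCoprodI]
  refine (CoprodI.lift_injective_of_ping_pong_of_not_subset _ (fun i : Bool => cond i X Y)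
    ?_ ?_ ?_).comp toCoprodI_injective
  · exact Or.inr (hcard.elim (⟨true, ·⟩) (⟨false, ·⟩))
  · rintro (_ | _) (_ | _) hij <;> first | exact absurd rfl hij | assumption
  · rintro (_ | _) (_ | _) hij <;> first | exact absurd rfl hij | exact hf | exact hg

end Monoid.Coprod

theorem Subgroup.three_le_mk_zpowers_of_sq_ne_one {G : Type*} [Group G] {b : G} (hb : b ^ 2 ≠ 1) :
    3 ≤ #(zpowers b) := by
  classical
  have hb1 : b ≠ 1 := by rintro rfl; simp at hb
  have hbb : b ^ 2 ≠ b := fun h => hb1 (by simpa [pow_two] using h)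
  let s : Finset (zpowers b) :=
    {1, ⟨b, mem_zpowers b⟩, ⟨b ^ 2, pow_mem (mem_zpowers b) 2⟩}
  have hs : s.card = 3 := Finset.card_eq_three.mpr
    ⟨_, _, _, by simpa [Subtype.ext_iff, eq_comm] using hb1,
      by simpa [Subtype.ext_iff, eq_comm] using hb, by simpa [Subtype.ext_iff] using hbb.symm, rfl⟩
  simpa [hs] using mk_set_le (s : Set (zpowers b))

theorem Subgroup.zpowers_smul_subset {G : Type*} [Group G] {α : Type*} [MulAction G α]
    {a : G} {Y Z : Set α} (h : ∀ n : ℤ, a ^ n ≠ 1 → (a ^ n) • Y ⊆ Z)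
    (x : zpowers a) (hx : x ≠ 1) : (x : G) • Y ⊆ Z := by
  obtain ⟨x, n, rfl⟩ := x
  exact h n fun h1 => hx (Subtype.ext h1)

theorem stmt_2_general {G : Type*} [Group G] {X : Type*} [MulAction G X]
    (a b : G) (hb : b ^ 2 ≠ 1) (Xa Xb : Set X)
    (hab : ¬ Xa ⊆ Xb) (hba : ¬ Xb ⊆ Xa)
    (hB : ∀ n : ℤ, b ^ n ≠ 1 → (b ^ n) • Xa ⊆ Xb)
    (hA : ∀ n : ℤ, a ^ n ≠ 1 → (a ^ n) • Xb ⊆ Xa) :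
    Function.Injective
      ⇑(Monoid.Coprod.lift (Subgroup.zpowers a).subtype (Subgroup.zpowers b).subtype) :=
  Monoid.Coprod.lift_injective_of_ping_pong
    (H := fun i => ↥(cond i (zpowers a) (zpowers b))) (zpowers a).subtype (zpowers b).subtype
    Xa Xb hab hba (Or.inr (three_le_mk_zpowers_of_sq_ne_one hb)) (zpowers_smul_subset hA)
    (zpowers_smul_subset hB)

theorem stmt_2 {G : Type*} [Group G] {X : Type*} [MulAction G X] [FaithfulSMul G X]
    (a b : G) (hb : b ^ 2 ≠ 1) (Xa Xb : Set X)
    (hab : ¬ Xa ⊆ Xb) (hba : ¬ Xb ⊆ Xa)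
    (hB : ∀ n : ℤ, b ^ n ≠ 1 → (b ^ n) • Xa ⊆ Xb)
    (hA : ∀ n : ℤ, a ^ n ≠ 1 → (a ^ n) • Xb ⊆ Xa) :
    Function.Injective
      ⇑(Monoid.Coprod.lift (Subgroup.zpowers a).subtype (Subgroup.zpowers b).subtype) :=
  stmt_2_general a b hb Xa Xb hab hba hB hA
end

section
/- In a free group F with free basis {k₁, k₂, k₃, k₄}, for indices a ≠ b and c ≠ d in {1,2,3,4} with (a,b) ≠ (c,d) and either b ≠ c or d ≠ a, the elements f_{ab} = k_a⁻¹k_b and f_{cd} = k_c⁻¹k_d generate a free subgroup of rank 2. -/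
/-!
Send `k_i` to a "potential" `g i` in the free group on `x, y` chosen so that
`(g a)⁻¹ * g b = x` and `(g c)⁻¹ * g d = y`. The induced homomorphism is a left inverse of
`x ↦ f_{ab}, y ↦ f_{cd}`, which is therefore injective. Such a potential exists because the
edges `{a, b}` and `{c, d}` are distinct, so one endpoint of `{c, d}` lies outside `{a, b}`
and its value can be chosen freely.
-/

namespace FreeGroup

theorem injective_lift_of_retraction {ι G : Type*} [Group G] (v : ι → G)
    (φ : G →* FreeGroup ι) (hφ : ∀ i, φ (v i) = of i) : Function.Injective (lift v) := by
  have hcomp : φ.comp (lift v) = MonoidHom.id _ := ext_hom _ _ fun i => by simp [hφ]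
  exact Function.LeftInverse.injective (g := φ) fun w => DFunLike.congr_fun hcomp w

end FreeGroup

section Potential

variable {α G : Type*} [DecidableEq α] [Group G]

theorem exists_inv_mul_eq_pair_of_notMem {a b c d : α} (hab : a ≠ b) (hcd : c ≠ d)
    (hda : d ≠ a) (hdb : d ≠ b) (x y : G) :
    ∃ g : α → G, (g a)⁻¹ * g b = x ∧ (g c)⁻¹ * g d = y := by
  let g₀ : α → G := Pi.mulSingle b x
  refine ⟨Function.update g₀ d (g₀ c * y), ?_, ?_⟩
  · simp [g₀, hda.symm, hdb.symm, hab]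
  · simp [hcd]

theorem exists_inv_mul_eq_pair {a b c d : α} (hab : a ≠ b) (hcd : c ≠ d)
    (hne : (a, b) ≠ (c, d)) (h : b ≠ c ∨ d ≠ a) (x y : G) :
    ∃ g : α → G, (g a)⁻¹ * g b = x ∧ (g c)⁻¹ * g d = y := by
  have hout : (d ≠ a ∧ d ≠ b) ∨ (c ≠ a ∧ c ≠ b) := by
    by_contra! hin
    grind
  rcases hout with ⟨hda, hdb⟩ | ⟨hca, hcb⟩
  · exact exists_inv_mul_eq_pair_of_notMem hab hcd hda hdb x y
  · obtain ⟨g, hgab, hgdc⟩ := exists_inv_mul_eq_pair_of_notMem hab hcd.symm hca hcb x y⁻¹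
    exact ⟨g, hgab, by rw [← inv_inv y, ← hgdc, mul_inv_rev, inv_inv]⟩

end Potential

theorem stmt_5 (a b c d : Fin 4) (hab : a ≠ b) (hcd : c ≠ d)
    (hne : (a, b) ≠ (c, d)) (h : b ≠ c ∨ d ≠ a) :
    Function.Injective
      ⇑(FreeGroup.lift
          ![(FreeGroup.of a)⁻¹ * FreeGroup.of b, (FreeGroup.of c)⁻¹ * FreeGroup.of d] :
        FreeGroup (Fin 2) →* FreeGroup (Fin 4)) := by
  obtain ⟨g, hgab, hgcd⟩ :=
    exists_inv_mul_eq_pair hab hcd hne h (FreeGroup.of (0 : Fin 2)) (FreeGroup.of 1)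
  refine FreeGroup.injective_lift_of_retraction _ (FreeGroup.lift g) fun i => ?_
  fin_cases i <;> simpa
end

section
/- Let X₁, X₂, X₃, X₄ be closed arcs (each a proper closed subset homeomorphic to a closed interval, possibly a point) in the circle S¹. Then X₁, X₂, X₃, X₄ cannot simultaneously satisfy: (i) every three of them cover S¹; and (ii) every three of them have empty intersection. -/
/-- A closed arc in the circle `ℝ/ℤ`: the image of a closed interval under the
quotient map. -/
def IsClosedArc (A : Set (AddCircle (1 : ℝ))) : Prop :=
  ∃ x y : ℝ, x ≤ y ∧ A = (fun t : ℝ => (t : AddCircle (1 : ℝ))) '' Set.Icc x y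

theorem stmt_6 (X : Fin 4 → Set (AddCircle (1 : ℝ)))
    (harc : ∀ i, IsClosedArc (X i)) (hproper : ∀ i, X i ≠ Set.univ)
    (hcover : ∀ a b c : Fin 4, a ≠ b → b ≠ c → a ≠ c →
      X a ∪ X b ∪ X c = Set.univ)
    (hempty : ∀ a b c : Fin 4, a ≠ b → b ≠ c → a ≠ c →
      X a ∩ X b ∩ X c = ∅) :
    False := by
  classical
  -- Each `X i` is closed.
  have hclosed : ∀ i, IsClosed (X i) := by
    intro i
    obtain ⟨x, y, -, hXi⟩ := harc i
    rw [hXi]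
    exact (isCompact_Icc.image (AddCircle.continuous_mk' 1)).isClosed
  -- Every point lies in at least two of the arcs.
  have hpair : ∀ z : AddCircle (1 : ℝ), ∃ a b : Fin 4, a ≠ b ∧ z ∈ X a ∧ z ∈ X b := by
    intro z
    have m1 : z ∈ X 1 ∪ X 2 ∪ X 3 :=
      (hcover 1 2 3 (by decide) (by decide) (by decide)) ▸ Set.mem_univ z
    have m2 : z ∈ X 0 ∪ X 2 ∪ X 3 :=
      (hcover 0 2 3 (by decide) (by decide) (by decide)) ▸ Set.mem_univ z
    have m3 : z ∈ X 0 ∪ X 1 ∪ X 3 :=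
      (hcover 0 1 3 (by decide) (by decide) (by decide)) ▸ Set.mem_univ z
    have m4 : z ∈ X 0 ∪ X 1 ∪ X 2 :=
      (hcover 0 1 2 (by decide) (by decide) (by decide)) ▸ Set.mem_univ z
    simp only [Set.mem_union] at m1 m2 m3 m4
    have key : (z ∈ X 0 ∧ z ∈ X 1) ∨ (z ∈ X 0 ∧ z ∈ X 2) ∨ (z ∈ X 0 ∧ z ∈ X 3) ∨
        (z ∈ X 1 ∧ z ∈ X 2) ∨ (z ∈ X 1 ∧ z ∈ X 3) ∨ (z ∈ X 2 ∧ z ∈ X 3) := by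
      tauto
    rcases key with h | h | h | h | h | h
    · exact ⟨0, 1, by decide, h.1, h.2⟩
    · exact ⟨0, 2, by decide, h.1, h.2⟩
    · exact ⟨0, 3, by decide, h.1, h.2⟩
    · exact ⟨1, 2, by decide, h.1, h.2⟩
    · exact ⟨1, 3, by decide, h.1, h.2⟩
    · exact ⟨2, 3, by decide, h.1, h.2⟩
  -- Fix a pair of arcs through the point `0`.
  obtain ⟨i, j, hij, hzi, hzj⟩ := hpair (0 : AddCircle (1 : ℝ))
  -- The complement of `X i ∩ X j` is the union of the other pairwise intersections.
  set C : Set (AddCircle (1 : ℝ)) :=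
    ⋃ p : Fin 4 × Fin 4,
      if p.1 ≠ p.2 ∧ p ≠ (i, j) ∧ p ≠ (j, i) then X p.1 ∩ X p.2 else ∅ with hC
  have hCclosed : IsClosed C := by
    rw [hC]
    refine isClosed_iUnion_of_finite fun p => ?_
    split_ifs
    · exact (hclosed p.1).inter (hclosed p.2)
    · exact isClosed_empty
  have hC_eq : C = (X i ∩ X j)ᶜ := by
    ext z
    simp only [hC, Set.mem_iUnion, Set.mem_compl_iff]
    constructor
    · rintro ⟨⟨a, b⟩, hp⟩ hzY
      split_ifs at hp with hcond
      · obtain ⟨hab, hnij, hnji⟩ := hcond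
        obtain ⟨hza, hzb⟩ := hp
        obtain ⟨hzi', hzj'⟩ := hzY
        by_cases hai : a = i
        · subst hai
          have hbj : b ≠ j := fun h => hnij (by rw [h])
          have hbi : b ≠ a := (Ne.symm hab)
          have := hempty a j b hij (Ne.symm hbj) (Ne.symm hbi)
          exact absurd this (by
            intro h
            exact (h ▸ (⟨⟨hzi', hzj'⟩, hzb⟩ : z ∈ X a ∩ X j ∩ X b) : z ∈ (∅ : Set _)))
        · by_cases haj : a = j
          · subst haj
            have hbi : b ≠ i := fun h => hnji (by rw [h])
            have hbj : b ≠ a := (Ne.symm hab)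
            have := hempty i a b hij (Ne.symm hbj) (Ne.symm hbi)
            exact absurd this (by
              intro h
              exact (h ▸ (⟨⟨hzi', hzj'⟩, hzb⟩ : z ∈ X i ∩ X a ∩ X b) : z ∈ (∅ : Set _)))
          · have := hempty i j a hij (fun h => haj h.symm) (fun h => hai h.symm)
            exact absurd this (by
              intro h
              exact (h ▸ (⟨⟨hzi', hzj'⟩, hza⟩ : z ∈ X i ∩ X j ∩ X a) : z ∈ (∅ : Set _)))
      · exact hp.elim
    · intro hzY
      obtain ⟨a, b, hab, hza, hzb⟩ := hpair z
      refine ⟨(a, b), ?_⟩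
      rw [if_pos]
      · exact ⟨hza, hzb⟩
      refine ⟨hab, ?_, ?_⟩
      · intro h
        rw [Prod.mk.injEq] at h
        obtain ⟨rfl, rfl⟩ := h
        exact hzY ⟨hza, hzb⟩
      · intro h
        rw [Prod.mk.injEq] at h
        obtain ⟨rfl, rfl⟩ := h
        exact hzY ⟨hzb, hza⟩
  -- `X i ∩ X j` is a nonempty clopen set, hence the whole circle.
  have hYclopen : IsClopen (X i ∩ X j) :=
    ⟨(hclosed i).inter (hclosed j), isClosed_compl_iff.mp (hC_eq ▸ hCclosed)⟩
  rcases isClopen_iff.mp hYclopen with h | h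
  · have : (0 : AddCircle (1 : ℝ)) ∈ X i ∩ X j := ⟨hzi, hzj⟩
    rw [h] at this
    exact this
  · exact hproper i (Set.eq_univ_of_univ_subset (h ▸ Set.inter_subset_left))
end

section
/- Let f be an orientation-preserving homeomorphism of the circle S¹ = ℝ/ℤ with rational rotation number p/q in lowest terms. Then there exists a periodic orbit of f of period exactly q. -/
/-- Poincaré's lemma: an orientation-preserving circle homeomorphism (given by a
bijective continuous degree-one lift `F`) with rotation number `p/q` in lowest terms
has a periodic orbit of period exactly `q`: there is a point `x` with
`F^q x = x + p`, while no smaller positive power of the induced circle map fixes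
the image of `x`. -/
theorem stmt_10 (F : CircleDeg1Lift) (hbij : Function.Bijective F)
    (hcont : Continuous F) (p : ℤ) (q : ℕ) (hq : 0 < q)
    (hcop : Nat.Coprime p.natAbs q)
    (hrot : F.translationNumber = (p : ℝ) / (q : ℝ)) :
    ∃ x : ℝ, (F ^ q) x = x + p ∧
      ∀ i : ℕ, 0 < i → i < q → ∀ m : ℤ, (F ^ i) x ≠ x + m := by
  obtain ⟨x, hx⟩ := (F.translationNumber_eq_rat_iff hcont hq).mp hrot
  refine ⟨x, hx, fun i hi hiq m hm => ?_⟩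
  have h1 : F.translationNumber = (m : ℝ) / (i : ℝ) :=
    (F.translationNumber_eq_rat_iff hcont hi).mpr ⟨x, hm⟩
  have hq0 : (q : ℝ) ≠ 0 := Nat.cast_ne_zero.mpr hq.ne'
  have hi0 : (i : ℝ) ≠ 0 := Nat.cast_ne_zero.mpr hi.ne'
  have h2 : (p : ℝ) * i = m * q := by
    field_simp [hrot] at h1
    rw [← h1, hrot, div_mul_eq_mul_div, div_mul_cancel₀ _ hq0]
  have h3 : (p : ℤ) * i = m * q := by exact_mod_cast h2
  have h4 : (q : ℤ) ∣ p * i := h3 ▸ Dvd.intro_left m rfl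
  have h5 : q ∣ p.natAbs * i := by
    have := Int.natAbs_dvd_natAbs.mpr h4
    simpa [Int.natAbs_mul] using this
  have h6 : q ∣ i := (Nat.Coprime.dvd_of_dvd_mul_left (hcop.symm) h5)
  exact absurd (Nat.le_of_dvd hi h6) (not_le.mpr hiq)
end
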